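/- A word of the form 0^i 1^j 0^k (i, j, k ≥ 1) is minimal forbidden for mesosome-avoidance if and only if i = k = 1 and j is even. -/

import Mathlib

/-- `x'` is a conjugate (cyclic shift) of `x`. -/
def Conj (x x' : List Bool) : Prop := ∃ u v : List Bool, x = u ++ v ∧ x' = v ++ u

/-- A mesosome: a nonempty word of the form `x ++ x'` with `x'` a conjugate of `x`, `x' ≠ x`. -/
def Mesosome (w : List Bool) : Prop :=
  ∃ x x' : List Bool, w = x ++ x' ∧ Conj x x' ∧ x' ≠ x ∧ x ≠ []

/-- A word is mesosome-free if no factor (contiguous subword) is a mesosome. -/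
def MesosomeFree (w : List Bool) : Prop := ∀ f : List Bool, f <:+: w → ¬ Mesosome f

/-- `w` is minimal forbidden: it is a mesosome, but no proper factor of it is. -/
def MinimalForbidden (w : List Bool) : Prop :=
  Mesosome w ∧ ∀ f : List Bool, f <:+: w → f ≠ w → ¬ Mesosome f

lemma conj_count {x x' : List Bool} (h : Conj x x') (b : Bool) :
    x'.count b = x.count b := by
  obtain ⟨u, v, rfl, rfl⟩ := h
  simp [List.count_append, Nat.add_comm]

lemma conj_length {x x' : List Bool} (h : Conj x x') : x'.length = x.length := by
  obtain ⟨u, v, rfl, rfl⟩ := h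
  simp [Nat.add_comm]

lemma meso_010 (j : ℕ) (hj : 1 ≤ j) (hje : Even j) :
    Mesosome ([false] ++ List.replicate j true ++ [false]) := by
  obtain ⟨m, rfl⟩ := hje
  have hm : 1 ≤ m := by omega
  refine ⟨false :: List.replicate m true, List.replicate m true ++ [false], ?_,
    ⟨[false], List.replicate m true, rfl, rfl⟩, ?_, by simp⟩
  · rw [List.replicate_add]
    simp only [List.cons_append, List.singleton_append, List.append_assoc, List.nil_append]
  · obtain ⟨m', rfl⟩ := Nat.exists_eq_succ_of_ne_zero (by omega : m ≠ 0)
    simp [List.replicate_succ]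

lemma min_010 (j : ℕ) (f : List Bool)
    (hinf : f <:+: ([false] ++ List.replicate j true ++ [false]))
    (hne : f ≠ [false] ++ List.replicate j true ++ [false]) : ¬ Mesosome f := by
  rintro ⟨x, x', rfl, hconj, hxne, hx0⟩
  obtain ⟨s, t, hst⟩ := hinf
  have hcw : ([false] ++ List.replicate j true ++ [false]).count false = 2 := by simp [List.count_replicate]
  have hcf : (x ++ x').count false = 2 * x.count false := by
    rw [List.count_append, conj_count hconj]; ring
  have hsum : s.count false + (x ++ x').count false + t.count false = 2 := by
    rw [← hcw, ← hst]; simp [List.count_append, List.count_replicate]; omega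
  have hle : x.count false ≤ 1 := by omega
  interval_cases hc : x.count false
  · -- no falses: both halves all true, equal length, hence equal
    have hx : x = List.replicate x.length true := by
      rw [List.eq_replicate_iff]
      refine ⟨rfl, fun b hb => ?_⟩
      cases b
      · exact absurd (List.count_pos_iff.mpr hb) (by omega)
      · rfl
    have hc' : x'.count false = 0 := by rw [conj_count hconj]; omega
    have hx' : x' = List.replicate x'.length true := by
      rw [List.eq_replicate_iff]
      refine ⟨rfl, fun b hb => ?_⟩
      cases b
      · exact absurd (List.count_pos_iff.mpr hb) (by omega)
      · rfl
    rw [conj_length hconj] at hx'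
    exact hxne (hx'.trans hx.symm)
  · -- two falses in f: s and t have none
    have hs0 : s.count false = 0 := by omega
    have ht0 : t.count false = 0 := by omega
    have hs : s = [] := by
      cases s with
      | nil => rfl
      | cons a s' =>
        have : a = false := by
          have := hst
          simp only [List.cons_append, List.singleton_append] at this
          exact (List.cons.injEq _ _ _ _).mp this |>.1
        subst this
        simp [List.count_cons] at hs0
    subst hs
    have ht : t = [] := by
      rcases t.eq_nil_or_concat with rfl | ⟨t', a, rfl⟩
      · rfl
      · exfalso
        have h2 : ((x ++ x') ++ t') ++ [a] =
            ([false] ++ List.replicate j true) ++ [false] := by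
          simpa [List.append_assoc] using hst
        have := (List.append_inj' h2 (by simp)).2
        simp at this
        subst this
        simp [List.count_append] at ht0
    subst ht
    simp at hst
    exact hne hst

theorem stmt13 (i j k : ℕ) (hi : 1 ≤ i) (hj : 1 ≤ j) (hk : 1 ≤ k) :
    MinimalForbidden (List.replicate i false ++ List.replicate j true ++ List.replicate k false)
      ↔ i = 1 ∧ k = 1 ∧ Even j := by
  obtain ⟨i', rfl⟩ := Nat.exists_eq_succ_of_ne_zero (by omega : i ≠ 0)
  obtain ⟨k', rfl⟩ := Nat.exists_eq_succ_of_ne_zero (by omega : k ≠ 0)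
  constructor
  · rintro ⟨hm, hmin⟩
    have hje : Even j := by
      obtain ⟨x, x', hw, hconj, -, -⟩ := hm
      have hct : (List.replicate (i'+1) false ++ List.replicate j true ++
          List.replicate (k'+1) false).count true = j := by
        simp [List.count_append, List.count_replicate]
      rw [hw, List.count_append, conj_count hconj] at hct
      exact ⟨_, hct.symm⟩
    have hinf : ([false] ++ List.replicate j true ++ [false]) <:+:
        (List.replicate (i'+1) false ++ List.replicate j true ++ List.replicate (k'+1) false) :=
      ⟨List.replicate i' false, List.replicate k' false, by
        rw [show List.replicate (i'+1) false = List.replicate i' false ++ [false] from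
            List.replicate_succ',
          show List.replicate (k'+1) false = [false] ++ List.replicate k' false from rfl]
        simp [List.append_assoc]⟩
    have heq : ([false] ++ List.replicate j true ++ [false]) =
        (List.replicate (i'+1) false ++ List.replicate j true ++ List.replicate (k'+1) false) := by
      by_contra hne
      exact hmin _ hinf hne (meso_010 j hj hje)
    have hlen := congrArg List.length heq
    simp at hlen
    refine ⟨by omega, by omega, hje⟩
  · rintro ⟨hi1, hk1, hje⟩
    have hi' : i' = 0 := by omega
    have hk' : k' = 0 := by omega
    subst hi' hk'
    constructor
    · simpa using meso_010 j hj hje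
    · intro f hf hne
      exact min_010 j f (by simpa using hf) (by simpa using hne)
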